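/- Let A be a complex *-algebra that is algebraic. Then the involution of A is proper if and only if A is hermitian and von Neumann regular. -/

import Mathlib

/-- A (possibly non-unital) complex algebra is *algebraic* if every element generates a
finite-dimensional subalgebra (equivalently, every element is a root of a nonzero
polynomial with complex coefficients). -/
def IsAlgebraicAlgebra (A : Type*) [NonUnitalRing A] [Module ℂ A] : Prop :=
  ∀ a : A, ∃ S : NonUnitalSubalgebra ℂ A, a ∈ S ∧ FiniteDimensional ℂ S

/-- A pre-C*-norm on a complex `*`-algebra: a submultiplicative norm `σ` with
`σ (x* x) = σ x ^ 2`. -/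
def HasPreCstarNorm (A : Type*) [NonUnitalRing A] [Module ℂ A] [Star A] : Prop :=
  ∃ σ : A → ℝ,
    (∀ a : A, σ a = 0 ↔ a = 0) ∧
    (∀ (c : ℂ) (a : A), σ (c • a) = ‖c‖ * σ a) ∧
    (∀ a b : A, σ (a + b) ≤ σ a + σ b) ∧
    (∀ a b : A, σ (a * b) ≤ σ a * σ b) ∧
    (∀ a : A, σ (star a * a) = σ a ^ 2)

/-- The involution is proper if `a* a = 0` implies `a = 0`. -/
def HasProperInvolution (A : Type*) [NonUnitalRing A] [Star A] : Prop :=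
  ∀ a : A, star a * a = 0 → a = 0

/-- Hermitian: every selfadjoint element has real spectrum (computed in the
unitization `ℂ ⊕ A`). -/
def IsHermitianStarAlgebra (A : Type*) [NonUnitalRing A] [Module ℂ A]
    [SMulCommClass ℂ A A] [IsScalarTower ℂ A A] [Star A] : Prop :=
  ∀ a : A, star a = a → ∀ z ∈ spectrum ℂ (a : Unitization ℂ A), z.im = 0

/-- Semisimple: the Jacobson radical is `{0}` (expressed via the unitization, whose
Jacobson radical meets `A` exactly in the Jacobson radical of `A`). -/
def IsSemisimpleAlgebra (A : Type*) [NonUnitalRing A] [Module ℂ A]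
    [SMulCommClass ℂ A A] [IsScalarTower ℂ A A] : Prop :=
  ∀ a : A, (a : Unitization ℂ A) ∈ (⊥ : Ideal (Unitization ℂ A)).jacobson → a = 0

/-!
Let `h` be selfadjoint in an algebraic `*`-algebra `A` with proper involution, and let `μ` be the
minimal polynomial of `h` in the unitization. If `f(0) = 0` then `f(h)` lies in `A` and
`f(h)* f(h) = (f̄ f)(h)`, so properness gives: `μ ∣ f̄ f` implies `μ ∣ f`.
Writing `μ = (X - z) q` and taking `f = X (X - z̄) q` forces `z = 0` or `z = z̄`, so the
spectrum of `h` is real. Writing `μ = X² ρ` and taking `f = X ρ` gives a contradiction, so `0` is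
a simple root of `μ`; then `h g(h) h = h` for some `g` with `g(0) = 0`, and for `h = a* a` the
element `g(h) a*` is a von Neumann inverse of `a`.

Conversely, if `a* a = 0` and `a x a = a`, then `e = a x` is an idempotent with `e* e = 0`, and
`v = i (e - e*)` is selfadjoint with `v³ = -v`. As `±i` are not in its spectrum,
`1 + v² = (i - v)(-i - v)` is invertible, so `v = 0`; hence `e = e*` and `e = e* e = 0`.
-/

open Polynomial

theorem minpoly_isRoot_of_mem_spectrum {𝕜 B : Type*} [Field 𝕜] [Ring B] [Nontrivial B]
    [Algebra 𝕜 B] {b : B} {z : 𝕜} (hz : z ∈ spectrum 𝕜 b) : (minpoly 𝕜 b).IsRoot z := by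
  have := spectrum.subset_polynomial_aeval b (minpoly 𝕜 b) ⟨z, hz, rfl⟩
  rwa [minpoly.aeval, spectrum.zero_eq, Set.mem_singleton_iff] at this

theorem exists_mul_aeval_mul_eq_self {R B : Type*} [CommRing R] [Ring B] [Algebra R B] {b : B}
    {ρ : R[X]} (hb : aeval b (X * ρ) = 0) (hcop : IsCoprime X ρ) :
    ∃ g : R[X], g.coeff 0 = 0 ∧ b * aeval b g * b = b := by
  obtain ⟨u, v, huv⟩ := hcop
  -- `X u ≡ 1 mod ρ`, so `X (X u)² - X = X (X u - 1)(X u + 1)` is a multiple of `X ρ`.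
  refine ⟨X * u ^ 2, by simp, ?_⟩
  have key : X * (X * u ^ 2) * X - X = X * ρ * -(v * (X * u + 1)) := by
    linear_combination X * (X * u + 1) * huv
  have := congrArg (aeval b) key
  rwa [map_mul _ (X * ρ), hb, zero_mul, map_sub, map_mul, map_mul, aeval_X, sub_eq_zero] at this

theorem eq_zero_of_mul_self_mul_self_add_self_of_I_notMem_spectrum {B : Type*} [Ring B]
    [Algebra ℂ B] {v : B} (hv : v * v * v + v = 0) (hI : Complex.I ∉ spectrum ℂ v)
    (hnegI : -Complex.I ∉ spectrum ℂ v) : v = 0 := by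
  have hunit : IsUnit (1 + v * v) := by
    have factor : (algebraMap ℂ B Complex.I - v) * (algebraMap ℂ B (-Complex.I) - v)
        = 1 + v * v := by
      rw [sub_mul, mul_sub, mul_sub, ← map_mul, ← Algebra.commutes (-Complex.I) v, map_neg,
        mul_neg, Complex.I_mul_I, neg_neg, map_one]
      noncomm_ring
    rw [← factor]
    exact (spectrum.notMem_iff.mp hI).mul (spectrum.notMem_iff.mp hnegI)
  refine hunit.mul_right_cancel ?_
  rw [zero_mul, mul_add, mul_one, ← mul_assoc, add_comm, hv]

theorem IsSelfAdjoint.star_aeval {R B : Type*} [CommSemiring R] [StarRing R] [Semiring B]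
    [StarRing B] [Algebra R B] [StarModule R B] {x : B} (hx : IsSelfAdjoint x) (p : R[X]) :
    star (aeval x p) = aeval x (p.map (starRingEnd R)) := by
  induction p using Polynomial.induction_on' with
  | add p q hp hq => simp [hp, hq]
  | monomial n c =>
      rw [aeval_monomial, Polynomial.map_monomial, aeval_monomial, star_mul, star_pow, hx.star_eq,
        ← algebraMap_star_comm]
      exact (Algebra.commutes _ _).symm

theorem HasProperInvolution.mul_mul_eq_self_of_star_mul_self {R : Type*} [NonUnitalRing R]
    [StarRing R] (hR : HasProperInvolution R) {a x : R}
    (hx : star a * a * x * (star a * a) = star a * a) : a * (x * star a) * a = a := by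
  set c := a * x * (star a * a)
  have hac : star a * c = star a * a := by simpa only [c, mul_assoc] using hx
  have hca : star c * a = star a * a := by
    simpa only [star_mul, star_star] using congrArg star hac
  have hcc : star c * c = star a * a := by
    rw [show star c * c = star c * a * x * (star a * a) by simp only [c, mul_assoc], hca, hx]
  have ha_eq : a = c := sub_eq_zero.mp <| hR _ <| by
    rw [star_sub, sub_mul, mul_sub, mul_sub, hac, hca, hcc, sub_self]
  simpa only [c, mul_assoc] using ha_eq.symm

namespace Unitization

variable {R A : Type*} [CommRing R] [NonUnitalRing A] [Module R A] [SMulCommClass R A A]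
  [IsScalarTower R A A]

theorem fst_aeval_inr (a : A) (p : R[X]) : (aeval (a : Unitization R A) p).fst = p.coeff 0 := by
  change fstHom R A (aeval (a : Unitization R A) p) = _
  rw [← aeval_algHom_apply, fstHom_apply, fst_inr, coeff_zero_eq_aeval_zero]

theorem inr_snd_aeval_inr (a : A) {p : R[X]} (hp : p.coeff 0 = 0) :
    ((aeval (a : Unitization R A) p).snd : Unitization R A) = aeval (a : Unitization R A) p := by
  conv_rhs => rw [← inl_fst_add_inr_snd_eq (aeval _ p), fst_aeval_inr, hp, inl_zero, zero_add]

theorem coeff_zero_minpoly_inr (a : A) : (minpoly R (a : Unitization R A)).coeff 0 = 0 := by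
  rw [← fst_aeval_inr a, minpoly.aeval, fst_zero]

end Unitization

section

variable {A : Type*} [NonUnitalRing A] [Module ℂ A] [SMulCommClass ℂ A A] [IsScalarTower ℂ A A]

theorem IsAlgebraicAlgebra.isIntegral_inr (halg : IsAlgebraicAlgebra A) (a : A) :
    IsIntegral ℂ (a : Unitization ℂ A) := by
  obtain ⟨S, haS, _⟩ := halg a
  have : Module.Finite ℂ (Unitization ℂ S) :=
    Module.Finite.equiv (Unitization.linearEquiv ℂ ℂ S).symm
  simpa using (IsIntegral.of_finite ℂ ((⟨a, haS⟩ : S) : Unitization ℂ S)).map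
    (Unitization.lift
      ((Unitization.inrNonUnitalAlgHom ℂ A).comp (NonUnitalSubalgebraClass.subtype S)))

variable [StarRing A]

theorem IsHermitianStarAlgebra.eq_zero_of_mul_self_mul_self_add_self
    (hA : IsHermitianStarAlgebra A) {v : A} (hv : IsSelfAdjoint v) (hv3 : v * v * v + v = 0) :
    v = 0 := by
  have hreal : ∀ z ∈ spectrum ℂ (v : Unitization ℂ A), z.im = 0 := hA v hv
  refine Unitization.inr_injective (R := ℂ) <|
    eq_zero_of_mul_self_mul_self_add_self_of_I_notMem_spectrum ?_
    (fun hI => by simpa using hreal _ hI) (fun hI => by simpa using hreal _ hI)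
  rw [← Unitization.inr_mul, ← Unitization.inr_mul, ← Unitization.inr_add, hv3,
    Unitization.inr_zero]

variable [StarModule ℂ A]

namespace HasProperInvolution

section SelfAdjoint

variable (hA : HasProperInvolution A) {h : A} (hh : IsSelfAdjoint h)
include hA hh

theorem minpoly_dvd_of_dvd_map_conj_mul_self {f : ℂ[X]} (hf : f.coeff 0 = 0)
    (hdvd : minpoly ℂ (h : Unitization ℂ A) ∣ f.map (starRingEnd ℂ) * f) :
    minpoly ℂ (h : Unitization ℂ A) ∣ f := by
  set s := (aeval (h : Unitization ℂ A) f).snd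
  have hs : (s : Unitization ℂ A) = aeval (h : Unitization ℂ A) f :=
    Unitization.inr_snd_aeval_inr h hf
  suffices s = 0 by rw [minpoly.dvd_iff, ← hs, this, Unitization.inr_zero]
  refine hA s (Unitization.inr_injective (R := ℂ) ?_)
  rwa [Unitization.inr_mul, Unitization.inr_star, hs, (hh.inr (R := ℂ)).star_aeval, ← map_mul,
    Unitization.inr_zero, ← minpoly.dvd_iff]

theorem im_eq_zero_of_isRoot_minpoly (hint : IsIntegral ℂ (h : Unitization ℂ A)) {z : ℂ}
    (hz : (minpoly ℂ (h : Unitization ℂ A)).IsRoot z) : z.im = 0 := by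
  obtain ⟨q, hμ⟩ := dvd_iff_isRoot.mpr hz
  have hq : q ≠ 0 := by
    rintro rfl
    exact minpoly.ne_zero hint (by rw [hμ, mul_zero])
  have hdvd : minpoly ℂ (h : Unitization ℂ A) ∣ X * (X - C (starRingEnd ℂ z)) * q := by
    refine hA.minpoly_dvd_of_dvd_map_conj_mul_self hh (by simp [mul_assoc])
      ⟨X * q.map (starRingEnd ℂ) * X * (X - C (starRingEnd ℂ z)), ?_⟩
    rw [hμ]
    simp only [Polynomial.map_mul, Polynomial.map_sub, map_X, map_C, Complex.conj_conj]
    ring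
  rw [hμ, mul_comm (X - C z), mul_comm _ q, mul_dvd_mul_iff_left hq, dvd_iff_isRoot] at hdvd
  simp only [IsRoot, eval_mul, eval_X, eval_sub, eval_C, mul_eq_zero, sub_eq_zero] at hdvd
  rcases hdvd with hz0 | hzconj
  · simp [hz0]
  · exact Complex.conj_eq_iff_im.mp hzconj.symm

theorem not_X_sq_dvd_minpoly (hint : IsIntegral ℂ (h : Unitization ℂ A)) :
    ¬ X ^ 2 ∣ minpoly ℂ (h : Unitization ℂ A) := by
  rintro ⟨ρ, hρ⟩
  have hXρ : X * ρ ≠ 0 := by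
    rintro h0
    exact minpoly.ne_zero hint (by rw [hρ, pow_two, mul_assoc, h0, mul_zero])
  have hdvd : X ^ 2 * ρ ∣ X * ρ := by
    refine hρ ▸ hA.minpoly_dvd_of_dvd_map_conj_mul_self hh (by simp) ⟨ρ.map (starRingEnd ℂ), ?_⟩
    rw [hρ, Polynomial.map_mul, map_X]
    ring
  rw [pow_two, mul_assoc, ← one_mul (X * ρ), ← mul_assoc, mul_one,
    mul_dvd_mul_iff_right hXρ] at hdvd
  exact not_isUnit_X (isUnit_of_dvd_one hdvd)

theorem exists_mul_mul_eq_self_of_isSelfAdjoint (hint : IsIntegral ℂ (h : Unitization ℂ A)) :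
    ∃ x : A, h * x * h = h := by
  obtain ⟨ρ, hρ⟩ := X_dvd_iff.mpr (Unitization.coeff_zero_minpoly_inr (R := ℂ) h)
  have hcop : IsCoprime X ρ := by
    refine irreducible_X.coprime_iff_not_dvd.mpr fun hXρ => hA.not_X_sq_dvd_minpoly hh hint ?_
    rw [hρ, pow_two]
    exact mul_dvd_mul_left X hXρ
  obtain ⟨g, hg0, hg⟩ := exists_mul_aeval_mul_eq_self (hρ ▸ minpoly.aeval ℂ _) hcop
  refine ⟨(aeval (h : Unitization ℂ A) g).snd, Unitization.inr_injective (R := ℂ) ?_⟩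
  rwa [Unitization.inr_mul, Unitization.inr_mul, Unitization.inr_snd_aeval_inr h hg0]

end SelfAdjoint

variable (hA : HasProperInvolution A) (halg : IsAlgebraicAlgebra A)
include hA halg

theorem isHermitianStarAlgebra : IsHermitianStarAlgebra A :=
  fun a ha _ hz => hA.im_eq_zero_of_isRoot_minpoly ha (halg.isIntegral_inr a)
    (minpoly_isRoot_of_mem_spectrum hz)

theorem exists_mul_mul_eq_self (a : A) : ∃ x : A, a * x * a = a := by
  obtain ⟨x, hx⟩ := hA.exists_mul_mul_eq_self_of_isSelfAdjoint (.star_mul_self a)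
    (halg.isIntegral_inr _)
  exact ⟨x * star a, hA.mul_mul_eq_self_of_star_mul_self hx⟩

end HasProperInvolution

namespace IsHermitianStarAlgebra

variable (hA : IsHermitianStarAlgebra A)
include hA

theorem eq_zero_of_isIdempotentElem {e : A} (he : IsIdempotentElem e)
    (hse : star e * e = 0) : e = 0 := by
  have hse' : IsIdempotentElem (star e) := he.star
  set w := e - star e
  have hw3 : w * w * w = w := by
    have h3 : e * star e * e = 0 := by rw [mul_assoc, hse, mul_zero]
    have h4 : e * star e * star e = e * star e := by rw [mul_assoc, hse'.eq]
    simp only [w, sub_mul, mul_sub, he.eq, hse'.eq, hse, h3, h4, zero_mul]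
    abel
  have hw : w = 0 := by
    have hv := hA.eq_zero_of_mul_self_mul_self_add_self (v := Complex.I • w) ?_ ?_
    · simpa using hv
    · rw [IsSelfAdjoint, star_smul, star_sub, star_star, Complex.star_def, Complex.conj_I,
        neg_smul, ← smul_neg, neg_sub]
    · rw [smul_mul_smul, smul_mul_smul, hw3, ← add_smul]
      simp
  have hes : star e = e := (sub_eq_zero.mp hw).symm
  calc e = e * e := he.eq.symm
    _ = star e * e := by rw [hes]
    _ = 0 := hse

theorem hasProperInvolution (hreg : ∀ a : A, ∃ x : A, a * x * a = a) :
    HasProperInvolution A := by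
  intro a ha
  obtain ⟨x, hx⟩ := hreg a
  have he : IsIdempotentElem (a * x) := by rw [IsIdempotentElem, ← mul_assoc, hx]
  have hse : star (a * x) * (a * x) = 0 := by
    rw [star_mul, mul_assoc, ← mul_assoc (star a), ha, zero_mul, mul_zero]
  rw [← hx, hA.eq_zero_of_isIdempotentElem he hse, zero_mul]

end IsHermitianStarAlgebra

end

/-- In an algebraic complex `*`-algebra, the involution is proper iff the
algebra is hermitian and von Neumann regular. -/
theorem properInvolution_iff_hermitian_and_vonNeumannRegular (A : Type*) [NonUnitalRing A]
    [Module ℂ A] [SMulCommClass ℂ A A] [IsScalarTower ℂ A A] [StarRing A] [StarModule ℂ A]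
    (halg : IsAlgebraicAlgebra A) :
    HasProperInvolution A ↔ (IsHermitianStarAlgebra A ∧ ∀ a : A, ∃ x : A, a * x * a = a) :=
  ⟨fun hA => ⟨hA.isHermitianStarAlgebra halg, hA.exists_mul_mul_eq_self halg⟩,
    fun ⟨herm, hreg⟩ => herm.hasProperInvolution hreg⟩
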